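/- Let X be a non-degenerate set of s points in generic position in P^{n_1} × ⋯ × P^{n_k} and j ∈ D + e_l for some l with N(j − 2e_l) = s (and j − 2e_l ∈ N^k). Then W_j = (I_X)_j, i.e., all of (I_X)_j is generated by elements of degree j − e_l. -/

import Mathlib

/-!
Put `t = j - 2e_l`; generic position gives `H_X(t) = N(t) = s`, so evaluation `R_t → K^s`
at the points is onto. Pick a linear form `L` of block `l` vanishing at no point. A product
`x_m f` with `f ∈ R_{t+e_l}` then splits as `x_m (f - L g) + L (x_m g)`, where `g ∈ R_t`
interpolates `f / L` on `X`; the first term lies in `R_{e_l} (I_X)_{t+e_l}`. So every `F ∈ (I_X)_{t+2e_l}` is `L G` modulo that subspace, and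
`L G` vanishing on `X` forces `G ∈ (I_X)_{t+e_l}`, whence `L G ∈ R_{e_l} (I_X)_{t+e_l}`.
-/

open MvPolynomial

namespace MultiProjPoints

/-- The variable set of the multigraded coordinate ring of
`ℙ^{n 0} × ⋯ × ℙ^{n (k-1)}`: variables `x_{i,j}` with `i : Fin k`, `0 ≤ j ≤ n i`. -/
abbrev Var (k : ℕ) (n : Fin k → ℕ) := Σ i : Fin k, Fin (n i + 1)

/-- The `ℕ^k`-grading weight: `deg x_{i,j} = e_i`. -/
def wt (k : ℕ) (n : Fin k → ℕ) : Var k n → (Fin k → ℕ) := fun v => Pi.single v.1 1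

/-- The `i`-th standard basis vector of `ℕ^k`. -/
def e {k : ℕ} (l : Fin k) : Fin k → ℕ := Pi.single l 1

variable (K : Type) [Field K]

/-- The graded piece `R_d` of the `ℕ^k`-graded polynomial ring. -/
noncomputable def piece (k : ℕ) (n : Fin k → ℕ) (d : Fin k → ℕ) :
    Submodule K (MvPolynomial (Var k n) K) :=
  weightedHomogeneousSubmodule K (wt k n) d

/-- `N(d) = ∏ binom (n i + d i) (d i)`, the dimension of `R_d`. -/
def NN (k : ℕ) (n : Fin k → ℕ) (d : Fin k → ℕ) : ℕ := ∏ i, (n i + d i).choose (d i)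

/-- A (representative of a) point of `ℙ^{n 0} × ⋯ × ℙ^{n (k-1)}`. -/
def PointRep (k : ℕ) (n : Fin k → ℕ) := (i : Fin k) → Fin (n i + 1) → K

/-- A valid representative: every coordinate block is nonzero. -/
def IsRep {k : ℕ} {n : Fin k → ℕ} (P : PointRep K k n) : Prop := ∀ i, P i ≠ 0

/-- Two representatives define the same point of multi-projective space. -/
def ProjEq {k : ℕ} {n : Fin k → ℕ} (P Q : PointRep K k n) : Prop :=
  ∀ i, ∃ c : K, c ≠ 0 ∧ P i = c • Q i

/-- A tuple of representatives giving `s` distinct points. -/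
def SPoints {k : ℕ} {n : Fin k → ℕ} {s : ℕ} (P : Fin s → PointRep K k n) : Prop :=
  (∀ a, IsRep K (P a)) ∧ ∀ a b, a ≠ b → ¬ ProjEq K (P a) (P b)

/-- The defining ideal `I_X` of the set of points: all polynomials vanishing on
the multi-cone over the points, i.e. the intersection of the point ideals. -/
noncomputable def idealOfPoints {k : ℕ} {n : Fin k → ℕ} {s : ℕ}
    (P : Fin s → PointRep K k n) : Ideal (MvPolynomial (Var k n) K) :=
  ⨅ (a : Fin s), ⨅ (c : Fin k → K),
    RingHom.ker (eval (fun v : Var k n => c v.1 * P a v.1 v.2))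

/-- The degree-`d` piece `I_d` of an ideal, as a `K`-subspace. -/
noncomputable def idealPiece {k : ℕ} {n : Fin k → ℕ}
    (I : Ideal (MvPolynomial (Var k n) K)) (d : Fin k → ℕ) :
    Submodule K (MvPolynomial (Var k n) K) :=
  (Submodule.restrictScalars K I) ⊓ piece K k n d

/-- The multigraded Hilbert function of `X`:
`H_X(d) = dim (R/I_X)_d = dim R_d - dim (I_X)_d`. -/
noncomputable def hilbert {k : ℕ} {n : Fin k → ℕ} {s : ℕ}
    (P : Fin s → PointRep K k n) (d : Fin k → ℕ) : ℕ :=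
  NN k n d - Module.finrank K (idealPiece K (idealOfPoints K P) d)

/-- Generic position: `s` distinct points whose Hilbert function is maximal. -/
def GenericPosition {k : ℕ} {n : Fin k → ℕ} {s : ℕ} (P : Fin s → PointRep K k n) : Prop :=
  SPoints K P ∧ ∀ d : Fin k → ℕ, hilbert K P d = min (NN k n d) s

/-- `R_{e_l}·V`: the span of all products of a variable of degree `e_l`
with an element of `V`. -/
noncomputable def mulSpan {k : ℕ} {n : Fin k → ℕ} (l : Fin k)
    (V : Submodule K (MvPolynomial (Var k n) K)) :
    Submodule K (MvPolynomial (Var k n) K) :=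
  Submodule.span K {g | ∃ (m : Fin (n l + 1)) (f : MvPolynomial (Var k n) K),
    f ∈ V ∧ g = X (⟨l, m⟩ : Var k n) * f}

/-- `D = min { i ∈ ℕ^k | N(i) > s }` (minimal elements for the componentwise order). -/
def Dset (k : ℕ) (n : Fin k → ℕ) (s : ℕ) : Set (Fin k → ℕ) :=
  {i | s < NN k n i ∧ ∀ j : Fin k → ℕ, s < NN k n j → j ≤ i → j = i}

/-- The irrelevant maximal ideal of `R`, generated by all the variables. -/
noncomputable def irrelevant (k : ℕ) (n : Fin k → ℕ) : Ideal (MvPolynomial (Var k n) K) :=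
  Ideal.span (Set.range (X : Var k n → MvPolynomial (Var k n) K))


section

variable {K} {k : ℕ} {n : Fin k → ℕ}

lemma weight_wt_apply (σ : Var k n →₀ ℕ) (i : Fin k) :
    Finsupp.weight (wt k n) σ i = ∑ m, σ ⟨i, m⟩ := by
  rw [Finsupp.weight_apply, Finsupp.sum_fintype _ _ (fun _ => by simp), Finset.sum_apply,
    ← Finset.univ_sigma_univ, Finset.sum_sigma, Finset.sum_eq_single i]
  · simp [wt]
  · intro b _ hb
    simp [wt, Ne.symm hb]
  · simp

lemma weight_wt_single (l : Fin k) (m : Fin (n l + 1)) :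
    Finsupp.weight (wt k n) (Finsupp.single ⟨l, m⟩ 1) = e l := by
  simp [Finsupp.weight_apply, wt, e]

lemma piece_eq_restrictSupport (d : Fin k → ℕ) :
    piece K k n d = restrictSupport K {σ : Var k n →₀ ℕ | Finsupp.weight (wt k n) σ = d} :=
  weightedHomogeneousSubmodule_eq_finsupp_supported K (wt k n) d

lemma X_mul_mem_piece {d : Fin k → ℕ} (l : Fin k) (m : Fin (n l + 1))
    {f : MvPolynomial (Var k n) K} (hf : f ∈ piece K k n d) :
    X ⟨l, m⟩ * f ∈ piece K k n (d + e l) := by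
  rw [piece, mem_weightedHomogeneousSubmodule, add_comm]
  exact (isWeightedHomogeneous_X K (wt k n) ⟨l, m⟩).mul hf

noncomputable def monomialsOfDegreeEquiv (d : Fin k → ℕ) :
    {σ : Var k n →₀ ℕ // Finsupp.weight (wt k n) σ = d} ≃ Π i, Sym (Fin (n i + 1)) (d i)
    where
  toFun σ i := (Sym.equivNatSumOfFintype _ (d i)).symm
    ⟨fun m => σ.1 ⟨i, m⟩, by rw [← weight_wt_apply, σ.2]⟩
  invFun g := ⟨Finsupp.equivFunOnFinite.symm
      (fun v => (Sym.equivNatSumOfFintype _ (d v.1) (g v.1) : Fin (n v.1 + 1) → ℕ) v.2), by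
    funext i
    rw [weight_wt_apply]
    simp only [Finsupp.coe_equivFunOnFinite_symm, Sym.coe_equivNatSumOfFintype_apply_apply]
    exact (Multiset.sum_count_eq_card fun a _ => Finset.mem_univ a).trans (g i).2⟩
  left_inv σ := Subtype.ext <| Finsupp.ext fun ⟨i, m⟩ => by simp
  right_inv g := funext fun i => (Sym.equivNatSumOfFintype _ (d i)).injective <|
    Subtype.ext <| funext fun m => by simp

noncomputable instance (d : Fin k → ℕ) :
    Fintype {σ : Var k n →₀ ℕ | Finsupp.weight (wt k n) σ = d} :=
  Fintype.ofEquiv _ (monomialsOfDegreeEquiv d).symm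

instance (d : Fin k → ℕ) : FiniteDimensional K (piece K k n d) := by
  rw [piece_eq_restrictSupport]
  exact Module.Finite.of_basis (basisRestrictSupport K _)

lemma finrank_piece (d : Fin k → ℕ) : Module.finrank K (piece K k n d) = NN k n d := by
  rw [piece_eq_restrictSupport, Module.finrank_eq_card_basis (basisRestrictSupport K _),
    ← Nat.card_eq_fintype_card]
  refine (Nat.card_congr (monomialsOfDegreeEquiv d)).trans ?_
  rw [Nat.card_pi, NN]
  refine Finset.prod_congr rfl fun i _ => ?_
  rw [Nat.card_eq_fintype_card, Sym.card_sym_eq_choose, Fintype.card_fin, Nat.add_right_comm,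
    Nat.add_sub_cancel]

/-- A monomial of degree `d + e l` contains some variable of block `l`, which can be split off. -/
lemma piece_add_le_mulSpan (l : Fin k) (d : Fin k → ℕ) :
    piece K k n (d + e l) ≤ mulSpan K l (piece K k n d) := by
  rw [piece_eq_restrictSupport, restrictSupport_eq_span, Submodule.span_le]
  rintro _ ⟨σ, hσ, rfl⟩
  obtain ⟨m, hm⟩ : ∃ m, σ ⟨l, m⟩ ≠ 0 := by
    by_contra! h
    have := weight_wt_apply σ l
    simp [Set.mem_ofPred_eq.mp hσ, h, e] at this
  have hsplit : Finsupp.single ⟨l, m⟩ 1 + (σ - Finsupp.single ⟨l, m⟩ 1) = σ :=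
    add_tsub_cancel_of_le (Finsupp.single_le_iff.mpr (Nat.one_le_iff_ne_zero.mpr hm))
  have hweight : Finsupp.weight (wt k n) (σ - Finsupp.single ⟨l, m⟩ 1) = d := by
    have := congrArg (Finsupp.weight (wt k n)) hsplit
    rw [map_add, weight_wt_single, Set.mem_ofPred_eq.mp hσ, add_comm] at this
    exact add_right_cancel this
  refine Submodule.subset_span ⟨m, monomial (σ - Finsupp.single ⟨l, m⟩ 1) 1, ?_, ?_⟩
  · rw [piece, mem_weightedHomogeneousSubmodule]
    exact isWeightedHomogeneous_monomial _ _ _ hweight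
  · rw [X, monomial_mul, one_mul, hsplit]

lemma eval_smul_blocks_of_mem_piece (c : Fin k → K) (x : Var k n → K) {d : Fin k → ℕ}
    {p : MvPolynomial (Var k n) K} (hp : p ∈ piece K k n d) :
    eval (fun v => c v.1 * x v) p = (∏ i, c i ^ d i) * eval x p := by
  rw [piece, mem_weightedHomogeneousSubmodule] at hp
  rw [eval_eq', eval_eq', Finset.mul_sum]
  refine Finset.sum_congr rfl fun σ hσ => ?_
  have hblock : ∏ v : Var k n, c v.1 ^ σ v = ∏ i, c i ^ d i := by
    rw [← Finset.univ_sigma_univ, Finset.prod_sigma]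
    refine Finset.prod_congr rfl fun i _ => ?_
    change ∏ m : Fin (n i + 1), c i ^ σ ⟨i, m⟩ = c i ^ d i
    rw [Finset.prod_pow_eq_pow_sum, ← weight_wt_apply, hp (mem_support_iff.mp hσ)]
  simp_rw [mul_pow, Finset.prod_mul_distrib, hblock]
  ring

def PointRep.coords (x : PointRep K k n) : Var k n → K := fun v => x v.1 v.2

lemma mem_idealPiece_idealOfPoints_iff {s : ℕ} {P : Fin s → PointRep K k n}
    {d : Fin k → ℕ} {p : MvPolynomial (Var k n) K} :
    p ∈ idealPiece K (idealOfPoints K P) d ↔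
      p ∈ piece K k n d ∧ ∀ a, eval (P a).coords p = 0 := by
  simp only [idealPiece, idealOfPoints, Submodule.mem_inf, Submodule.restrictScalars_mem,
    Ideal.mem_iInf, RingHom.mem_ker, and_comm (a := p ∈ piece K k n d)]
  refine and_congr_left fun hp => forall_congr' fun a => ⟨fun h => ?_, fun h c => ?_⟩
  · have := h 1
    simp only [Pi.one_apply, one_mul] at this
    exact this
  · have := eval_smul_blocks_of_mem_piece c (P a).coords hp
    rwa [h, mul_zero] at this

lemma mulSpan_idealPiece_le (I : Ideal (MvPolynomial (Var k n) K)) (l : Fin k)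
    (d : Fin k → ℕ) : mulSpan K l (idealPiece K I d) ≤ idealPiece K I (d + e l) := by
  rw [mulSpan, Submodule.span_le]
  rintro _ ⟨m, f, ⟨hfI, hfd⟩, rfl⟩
  exact ⟨I.mul_mem_left _ hfI, X_mul_mem_piece l m hfd⟩

noncomputable def evalPoints {s : ℕ} (P : Fin s → PointRep K k n) :
    MvPolynomial (Var k n) K →ₗ[K] (Fin s → K) :=
  LinearMap.pi fun a => (aeval (P a).coords).toLinearMap

lemma evalPoints_apply {s : ℕ} (P : Fin s → PointRep K k n) (p : MvPolynomial (Var k n) K)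
    (a : Fin s) : evalPoints P p a = eval (P a).coords p :=
  rfl

lemma idealPiece_idealOfPoints_eq {s : ℕ} (P : Fin s → PointRep K k n) (d : Fin k → ℕ) :
    idealPiece K (idealOfPoints K P) d = piece K k n d ⊓ LinearMap.ker (evalPoints P) := by
  ext p
  simp [mem_idealPiece_idealOfPoints_iff, funext_iff, evalPoints_apply]

/-- `(I_X)_t` is the kernel of evaluation on `R_t`, so `H_X(t)` is the rank of that evaluation. -/
lemma exists_mem_piece_evalPoints_eq_of_hilbert_eq {s : ℕ} {P : Fin s → PointRep K k n}
    {t : Fin k → ℕ} (ht : hilbert K P t = s) (v : Fin s → K) :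
    ∃ g ∈ piece K k n t, evalPoints P g = v := by
  set Φ := (evalPoints P).domRestrict (piece K k n t)
  have hker : Module.finrank K (LinearMap.ker Φ)
      = Module.finrank K (idealPiece K (idealOfPoints K P) t) := by
    rw [← Submodule.finrank_map_subtype_eq, LinearMap.ker_domRestrict,
      Submodule.map_comap_subtype, ← idealPiece_idealOfPoints_eq]
  have hrange : Module.finrank K (LinearMap.range Φ) = Module.finrank K (Fin s → K) := by
    have := LinearMap.finrank_range_add_finrank_ker Φ
    rw [hilbert, ← finrank_piece (K := K)] at ht
    rw [Module.finrank_fin_fun]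
    omega
  obtain ⟨g, hg⟩ := LinearMap.range_eq_top.mp (Submodule.eq_top_of_finrank_eq hrange) v
  exact ⟨g, g.2, hg⟩

noncomputable def linForm (l : Fin k) (c : Fin (n l + 1) → K) : MvPolynomial (Var k n) K :=
  ∑ m, c m • X ⟨l, m⟩

lemma linForm_mem_piece (l : Fin k) (c : Fin (n l + 1) → K) :
    linForm l c ∈ piece K k n (e l) := by
  refine Submodule.sum_mem _ fun m _ => Submodule.smul_mem _ _ ?_
  rw [piece, mem_weightedHomogeneousSubmodule]
  exact isWeightedHomogeneous_X K (wt k n) ⟨l, m⟩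

lemma linForm_mul_mem_mulSpan (l : Fin k) (c : Fin (n l + 1) → K)
    {V : Submodule K (MvPolynomial (Var k n) K)} {f : MvPolynomial (Var k n) K} (hf : f ∈ V) :
    linForm l c * f ∈ mulSpan K l V := by
  rw [linForm, Finset.sum_mul]
  exact Submodule.sum_mem _ fun m _ => by
    rw [smul_mul_assoc]
    exact Submodule.smul_mem _ _ (Submodule.subset_span ⟨m, f, hf, rfl⟩)

lemma eval_linForm (l : Fin k) (c : Fin (n l + 1) → K) (x : PointRep K k n) :
    eval x.coords (linForm l c) = Fintype.linearCombination K (x l) c := by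
  simp [linForm, Fintype.linearCombination_apply, PointRep.coords]

lemma exists_eval_linForm_ne_zero [Infinite K] {s : ℕ} {P : Fin s → PointRep K k n}
    (hP : ∀ a, IsRep K (P a)) (l : Fin k) :
    ∃ c : Fin (n l + 1) → K, ∀ a, eval (P a).coords (linForm l c) ≠ 0 := by
  classical
  have hnonzero : ∀ a, ∃ c, Fintype.linearCombination K (P a l) c ≠ 0 := fun a => by
    obtain ⟨m, hm⟩ := Function.ne_iff.mp (hP a l)
    exact ⟨Pi.single m 1, by simpa using hm⟩
  obtain ⟨c, hc⟩ := Module.Dual.exists_forall_ne_zero_of_forall_exists _ hnonzero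
  exact ⟨c, fun a => by rw [eval_linForm]; exact hc a⟩

variable {s : ℕ} {P : Fin s → PointRep K k n}

lemma piece_le_mulSpan_sup_map_mulLeft {t : Fin k → ℕ}
    (ht : hilbert K P t = s) (l : Fin k) {c : Fin (n l + 1) → K}
    (hc : ∀ a, eval (P a).coords (linForm l c) ≠ 0) :
    piece K k n (t + e l + e l) ≤ mulSpan K l (idealPiece K (idealOfPoints K P) (t + e l))
      ⊔ (piece K k n (t + e l)).map (LinearMap.mulLeft K (linForm l c)) := by
  refine (piece_add_le_mulSpan l _).trans ?_
  rw [mulSpan, Submodule.span_le]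
  rintro _ ⟨m, f, hf, rfl⟩
  obtain ⟨g, hgt, hg⟩ := exists_mem_piece_evalPoints_eq_of_hilbert_eq ht
    fun a => eval (P a).coords f / eval (P a).coords (linForm l c)
  have hLg : linForm l c * g ∈ piece K k n (t + e l) := by
    rw [add_comm, piece, mem_weightedHomogeneousSubmodule]
    exact (linForm_mem_piece l c).mul hgt
  have hdiff : f - linForm l c * g ∈ idealPiece K (idealOfPoints K P) (t + e l) := by
    refine mem_idealPiece_idealOfPoints_iff.mpr ⟨sub_mem hf hLg, fun a => ?_⟩
    rw [map_sub, map_mul, ← evalPoints_apply P g, hg, mul_div_cancel₀ _ (hc a), sub_self]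
  have hsplit : X ⟨l, m⟩ * f = X ⟨l, m⟩ * (f - linForm l c * g)
      + LinearMap.mulLeft K (linForm l c) (X ⟨l, m⟩ * g) := by
    rw [LinearMap.mulLeft_apply]
    ring
  rw [SetLike.mem_coe, hsplit]
  exact Submodule.add_mem_sup (Submodule.subset_span ⟨m, _, hdiff, rfl⟩)
    (Submodule.mem_map_of_mem (X_mul_mem_piece l m hgt))

theorem mulSpan_idealPiece_eq_of_hilbert_eq [Infinite K] (hP : ∀ a, IsRep K (P a))
    {t : Fin k → ℕ} (ht : hilbert K P t = s) (l : Fin k) :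
    mulSpan K l (idealPiece K (idealOfPoints K P) (t + e l))
      = idealPiece K (idealOfPoints K P) (t + e l + e l) := by
  refine le_antisymm (mulSpan_idealPiece_le _ l _) fun F hF => ?_
  obtain ⟨c, hc⟩ := exists_eval_linForm_ne_zero hP l
  obtain ⟨hFpiece, hFzero⟩ := mem_idealPiece_idealOfPoints_iff.mp hF
  obtain ⟨y, hy, _, ⟨G, hG, rfl⟩, rfl⟩ :=
    Submodule.mem_sup.mp (piece_le_mulSpan_sup_map_mulLeft ht l hc hFpiece)
  have hyzero := mem_idealPiece_idealOfPoints_iff.mp (mulSpan_idealPiece_le _ l _ hy)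
  have hGI : G ∈ idealPiece K (idealOfPoints K P) (t + e l) := by
    refine mem_idealPiece_idealOfPoints_iff.mpr ⟨hG, fun a => ?_⟩
    have := hFzero a
    rw [map_add, hyzero.2 a, zero_add, LinearMap.mulLeft_apply, map_mul] at this
    exact (mul_eq_zero.mp this).resolve_left (hc a)
  exact add_mem hy (linForm_mul_mem_mulSpan l c hGI)

lemma sub_e_add_e_of_one_le {j : Fin k → ℕ} {l : Fin k} (hj : 1 ≤ j l) :
    j - e l + e l = j := by
  funext i
  rcases eq_or_ne i l with rfl | hi
  · simp [e]; omega
  · simp [e, hi]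

end

theorem W_eq_piece_of_N_stable_general (K : Type) [Field K] [IsAlgClosed K]
    (k : ℕ) (n : Fin k → ℕ) {s : ℕ}
    (P : Fin s → PointRep K k n) (hgen : GenericPosition K P)
    (l : Fin k) (j : Fin k → ℕ) (hj2 : 2 ≤ j l)
    (hN : NN k n (j - e l - e l) = s) :
    mulSpan K l (idealPiece K (idealOfPoints K P) (j - e l))
      = idealPiece K (idealOfPoints K P) j := by
  have hilbert_eq : hilbert K P (j - e l - e l) = s := by
    rw [hgen.2, hN, min_self]
  have hj1 : 1 ≤ (j - e l) l := by simp [e]; omega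
  have h := mulSpan_idealPiece_eq_of_hilbert_eq hgen.1.1 hilbert_eq l
  rwa [sub_e_add_e_of_one_le hj1, sub_e_add_e_of_one_le (by omega)] at h

theorem W_eq_piece_of_N_stable (K : Type) [Field K] [IsAlgClosed K] [CharZero K]
    (k : ℕ) (n : Fin k → ℕ) {s : ℕ} (hnd : ∀ i, n i < s)
    (P : Fin s → PointRep K k n) (hgen : GenericPosition K P)
    (l : Fin k) (j : Fin k → ℕ) (hj2 : 2 ≤ j l)
    (hjD : j - e l ∈ Dset k n s)
    (hN : NN k n (j - e l - e l) = s) :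
    mulSpan K l (idealPiece K (idealOfPoints K P) (j - e l))
      = idealPiece K (idealOfPoints K P) j :=
  W_eq_piece_of_N_stable_general K k n P hgen l j hj2 hN

end MultiProjPoints
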